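/- Let P_i > 0, P_j ≥ 0 for j = i+1,…,K, σ² > 0, c > 0, and p ∈ (0,1). If |h|² is exponentially distributed with mean c, then P( |h|²·P_i / (∑_{j>i} |h|²·P_j + σ²) > t ) ≤ p holds for all t satisfying t ≥ log(1/p)·c·P_i / ( log(1/p)·∑_{j>i} c·P_j + σ² ), provided P_i − t·∑_{j>i} P_j > 0 for such t; moreover when P_i − t·∑_{j>i} P_j ≤ 0 the probability is zero. -/

import Mathlib

/-!
For `x ≥ 0` the SINR `x a / (x S + σ²)` exceeds `t` exactly when `x (a - t S) > t σ²`. So the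
outage event is empty when `a ≤ t S`, and otherwise it is the exponential tail
`{|h|² > t σ² / (a - t S)}`, of probability `exp (-t σ² / (c (a - t S)))`; the lower bound on `t`
gives `t σ² / (a - t S) ≥ c log (1/p)`, i.e. this probability is at most `p`.
-/

open Set Real MeasureTheory

lemma integral_exp_neg_div_Ioi {c : ℝ} (hc : 0 < c) (a : ℝ) :
    ∫ x in Ioi a, (1 / c) * exp (-x / c) = exp (-a / c) := by
  have h := integral_exp_mul_Ioi (neg_neg_of_pos (inv_pos.2 hc)) a
  simp_rw [integral_const_mul, neg_div, div_eq_inv_mul, ← neg_mul, h]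
  field_simp

section SINR

variable {a S σ t : ℝ}

lemma sinr_superlevel_eq_Ioi (hS : 0 ≤ S) (hσ : 0 < σ) (ht : 0 ≤ t) (hgap : 0 < a - t * S) :
    {x : ℝ | x * a / (x * S + σ) > t} ∩ Ici 0 = Ioi (t * σ / (a - t * S)) := by
  ext x
  simp only [mem_inter_iff, mem_ofPred_eq, mem_Ici, mem_Ioi, div_lt_iff₀ hgap]
  constructor
  · rintro ⟨hx, hx0⟩
    rw [gt_iff_lt, lt_div_iff₀ (add_pos_of_nonneg_of_pos (mul_nonneg hx0 hS) hσ)] at hx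
    linarith
  · intro hx
    have hx0 : 0 ≤ x := by nlinarith [mul_nonneg ht hσ.le]
    rw [gt_iff_lt, lt_div_iff₀ (add_pos_of_nonneg_of_pos (mul_nonneg hx0 hS) hσ)]
    exact ⟨by linarith, hx0⟩

lemma sinr_superlevel_eq_empty (ha : 0 < a) (hS : 0 ≤ S) (hσ : 0 < σ) (hgap : a - t * S ≤ 0) :
    {x : ℝ | x * a / (x * S + σ) > t} ∩ Ici 0 = ∅ := by
  refine eq_empty_of_forall_notMem fun x ⟨hx, hx0⟩ => ?_
  rw [mem_ofPred_eq, gt_iff_lt, lt_div_iff₀ (add_pos_of_nonneg_of_pos (mul_nonneg hx0 hS) hσ)] at hx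
  have ht : 0 < t := by nlinarith
  nlinarith [mul_nonneg hx0 hS]

lemma mul_le_sinr_threshold {c L : ℝ} (hc : 0 < c) (hL : 0 ≤ L) (hS : 0 ≤ S) (hσ : 0 < σ)
    (ht : L * c * a / (L * (c * S) + σ) ≤ t) (hgap : 0 < a - t * S) :
    c * L ≤ t * σ / (a - t * S) := by
  rw [div_le_iff₀ (by positivity)] at ht
  rw [le_div_iff₀ hgap]
  linarith

end SINR

open Finset in
/-- Closed-form secrecy-outage condition for the single-antenna NOMA case.
`|h|²` is exponential with mean `c`; `P i > 0`, `P j ≥ 0` for `j > i`, `σ² > 0`,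
`p ∈ (0,1)`.  The probability (written via the exponential density) that the
eavesdropper's SINR `|h|²·P_i / (∑_{j>i} |h|²·P_j + σ²)` exceeds `t` is at most `p`
whenever `t ≥ log(1/p)·c·P_i / (log(1/p)·∑_{j>i} c·P_j + σ²)` and
`P_i − t·∑_{j>i} P_j > 0`; moreover when `P_i − t·∑_{j>i} P_j ≤ 0` the probability
is zero. -/
theorem siso_sop_condition (K : ℕ) (P : Fin K → ℝ) (i : Fin K) (σ2 c p t : ℝ)
    (hPi : 0 < P i) (hPj : ∀ j, i < j → 0 ≤ P j) (hσ : 0 < σ2) (hc : 0 < c)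
    (hp0 : 0 < p) (hp1 : p < 1) :
    ((t ≥ Real.log (1 / p) * c * P i /
        (Real.log (1 / p) * ∑ j ∈ univ.filter (fun j => i < j), c * P j + σ2) →
      0 < P i - t * ∑ j ∈ univ.filter (fun j => i < j), P j →
      (∫ x in {x : ℝ | x * P i / (x * (∑ j ∈ univ.filter (fun j => i < j), P j) + σ2) > t}
          ∩ Set.Ici 0, (1 / c) * Real.exp (-x / c)) ≤ p)
    ∧ (P i - t * ∑ j ∈ univ.filter (fun j => i < j), P j ≤ 0 →
      (∫ x in {x : ℝ | x * P i / (x * (∑ j ∈ univ.filter (fun j => i < j), P j) + σ2) > t}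
          ∩ Set.Ici 0, (1 / c) * Real.exp (-x / c)) = 0)) := by
  set S := ∑ j ∈ univ.filter (fun j => i < j), P j
  have hS : 0 ≤ S := Finset.sum_nonneg fun j hj => hPj j (Finset.mem_filter.1 hj).2
  have hL : 0 ≤ log (1 / p) := log_nonneg (one_le_one_div hp0 hp1.le)
  refine ⟨fun ht hgap => ?_, fun hgap => ?_⟩
  · rw [← Finset.mul_sum] at ht
    have ht0 : 0 ≤ t := le_trans (by positivity) ht
    have hthr := mul_le_sinr_threshold hc hL hS hσ ht hgap
    rw [sinr_superlevel_eq_Ioi hS hσ ht0 hgap, integral_exp_neg_div_Ioi hc]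
    calc exp (-(t * σ2 / (P i - t * S)) / c) ≤ exp (-log (1 / p)) := by
          rw [exp_le_exp, neg_div, neg_le_neg_iff, le_div_iff₀ hc]
          linarith
      _ = p := by rw [exp_neg, exp_log (by positivity), one_div, inv_inv]
  · rw [sinr_superlevel_eq_empty hPi hS hσ hgap, Measure.restrict_empty, integral_zero_measure]
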